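/- arXiv:math/0307166 — 2 statements merged into one kernel-verified Lean document; each statement's English description precedes it below -/
import Mathlib

section
/- If w ∈ Ṽ satisfies ρ(w) > 4, then there exists v ∈ Ṽ with v < w and ρ(v) = 4. -/
/-- `ρ(n) = 1 + (n−1)/(n+1)`; note that this gives `ρ(0) = 0`. -/
noncomputable def rho (n : ℕ) : ℝ := 1 + ((n : ℝ) - 1) / ((n : ℝ) + 1)

/-- The element of `Ṽ` whose entries are those of the list `l` (then zeros). -/
def ofList (l : List ℕ) : ℕ → ℕ := fun i => l.getD i 0

/-- Membership in `Ṽ`: a nonincreasing, finitely supported sequence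
of nonnegative integers. -/
def IsVt (v : ℕ → ℕ) : Prop :=
  (∀ i j, i ≤ j → v j ≤ v i) ∧ ∃ s, ∀ i, s ≤ i → v i = 0

/-- `ρ(v) = Σ_i ρ(v_i)`, a finite sum since `ρ(0) = 0` and `v` is finitely
supported. -/
noncomputable def rhoV (v : ℕ → ℕ) : ℝ := ∑ᶠ i, rho (v i)

lemma rho_zero : rho 0 = 0 := by norm_num [rho]

lemma rho_alt (n : ℕ) : rho n = 2 - 2 / ((n : ℝ) + 1) := by
  have h : (n : ℝ) + 1 ≠ 0 := by positivity
  unfold rho; field_simp; ring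

lemma rho_lt_two (n : ℕ) : rho n < 2 := by
  rw [rho_alt]
  have h : (0:ℝ) < 2 / ((n : ℝ) + 1) := by positivity
  linarith

lemma rho_mono {n m : ℕ} (h : n ≤ m) : rho n ≤ rho m := by
  rw [rho_alt, rho_alt]
  have h1 : (n : ℝ) + 1 ≤ (m : ℝ) + 1 := by exact_mod_cast by omega
  have h2 : (0:ℝ) < (n : ℝ) + 1 := by positivity
  have := div_le_div_of_nonneg_left (by norm_num : (0:ℝ) ≤ 2) h2 h1
  linarith

lemma rhoV_eq_sum (v : ℕ → ℕ) (s : ℕ) (hs : ∀ i, s ≤ i → v i = 0) :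
    rhoV v = ∑ i ∈ Finset.range s, rho (v i) := by
  apply finsum_eq_finset_sum_of_support_subset
  intro i hi
  simp only [Function.mem_support] at hi
  simp only [Finset.coe_range, Set.mem_Iio]
  by_contra hx
  push_neg at hx
  exact hi (by rw [hs i hx, rho_zero])

/-- auxiliary sequence with four entries -/
def mk4 (a b c d : ℕ) : ℕ → ℕ := fun i =>
  if i = 0 then a else if i = 1 then b else if i = 2 then c else if i = 3 then d else 0

lemma antitone_of_step (v : ℕ → ℕ) (hstep : ∀ i, v (i + 1) ≤ v i) :
    ∀ i j, i ≤ j → v j ≤ v i := by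
  intro i j hij
  induction hij with
  | refl => exact le_rfl
  | step h ih => exact le_trans (hstep _) ih

lemma isVt_mk4 (a b c d : ℕ) (hab : b ≤ a) (hbc : c ≤ b) (hcd : d ≤ c) :
    IsVt (mk4 a b c d) := by
  constructor
  · apply antitone_of_step
    intro i
    rcases i with _ | _ | _ | _ | i <;> simp [mk4]
    · exact hab
    · exact hbc
    · exact hcd
  · exact ⟨4, fun i hi => by
      rcases i with _ | _ | _ | _ | i <;> simp [mk4] <;> omega⟩

lemma rhoV_mk4 (a b c d : ℕ) :
    rhoV (mk4 a b c d) = rho a + rho b + rho c + rho d := by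
  rw [rhoV_eq_sum _ 4 (fun i hi => by
    rcases i with _ | _ | _ | _ | i <;> simp [mk4] <;> omega)]
  simp [Finset.sum_range_succ, mk4]

/-- If `w ∈ Ṽ` satisfies `ρ(w) > 4`, then there exists `v ∈ Ṽ`
with `v < w` and `ρ(v) = 4`. -/
theorem rho_gt_four_separated (w : ℕ → ℕ) (hw : IsVt w) (h : rhoV w > 4) :
    ∃ v : ℕ → ℕ, IsVt v ∧ (∀ i, v i ≤ w i) ∧ v ≠ w ∧ rhoV v = 4 := by
  obtain ⟨hmono, s, hs⟩ := hw
  -- A generic way to conclude, given suitable entries a ≥ b ≥ c ≥ d below w.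
  have key : ∀ a b c d : ℕ, a ≤ w 0 → b ≤ w 1 → c ≤ w 2 → d ≤ w 3 →
      b ≤ a → c ≤ b → d ≤ c → rho a + rho b + rho c + rho d = 4 →
      ∃ v : ℕ → ℕ, IsVt v ∧ (∀ i, v i ≤ w i) ∧ v ≠ w ∧ rhoV v = 4 := by
    intro a b c d h0 h1 h2 h3 hab hbc hcd hsum
    refine ⟨mk4 a b c d, isVt_mk4 a b c d hab hbc hcd, ?_, ?_, by
      rw [rhoV_mk4]; exact hsum⟩
    · intro i
      simp only [mk4]
      split_ifs with i0 i1 i2 i3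
      · subst i0; exact h0
      · subst i1; exact h1
      · subst i2; exact h2
      · subst i3; exact h3
      · exact Nat.zero_le _
    · intro heq
      have : rhoV w = 4 := by rw [← heq, rhoV_mk4]; exact hsum
      linarith
  have r1 : rho 1 = 1 := by norm_num [rho]
  have r2 : rho 2 = 4 / 3 := by norm_num [rho]
  have r3 : rho 3 = 3 / 2 := by norm_num [rho]
  have r5 : rho 5 = 5 / 3 := by norm_num [rho]
  have r0 := rho_zero
  -- w 2 ≥ 1
  have hw2pos : 1 ≤ w 2 := by
    by_contra hc
    push_neg at hc
    have h2 : w 2 = 0 := by omega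
    have : rhoV w = ∑ i ∈ Finset.range 2, rho (w i) :=
      rhoV_eq_sum w 2 (fun i hi => by
        have := hmono 2 i hi; omega)
    simp [Finset.sum_range_succ] at this
    have l0 := rho_lt_two (w 0)
    have l1 := rho_lt_two (w 1)
    rw [this] at h
    linarith
  by_cases h3 : 1 ≤ w 3
  · -- four nonzero entries: use (1,1,1,1)
    have h2 : 1 ≤ w 2 := hw2pos
    have h1 : 1 ≤ w 1 := le_trans h2 (hmono 1 2 (by omega))
    have h0 : 1 ≤ w 0 := le_trans h1 (hmono 0 1 (by omega))
    exact key 1 1 1 1 h0 h1 h2 h3 le_rfl le_rfl le_rfl (by rw [r1]; ring)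
  · push_neg at h3
    have hw3 : w 3 = 0 := by omega
    have hsum3 : rhoV w = rho (w 0) + rho (w 1) + rho (w 2) := by
      have : rhoV w = ∑ i ∈ Finset.range 3, rho (w i) :=
        rhoV_eq_sum w 3 (fun i hi => by
          have := hmono 3 i hi; omega)
      rw [this]
      simp [Finset.sum_range_succ]
    by_cases h2 : 2 ≤ w 2
    · -- use (2,2,2)
      have h1 : 2 ≤ w 1 := le_trans h2 (hmono 1 2 (by omega))
      have h0 : 2 ≤ w 0 := le_trans h1 (hmono 0 1 (by omega))
      exact key 2 2 2 0 h0 h1 h2 (Nat.zero_le _) le_rfl le_rfl (Nat.zero_le _)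
        (by rw [r2, r0]; ring)
    · push_neg at h2
      have hw2 : w 2 = 1 := by omega
      have rw2 : rho (w 2) = 1 := by rw [hw2, r1]
      by_cases h1 : 3 ≤ w 1
      · -- use (3,3,1)
        have h0 : 3 ≤ w 0 := le_trans h1 (hmono 0 1 (by omega))
        exact key 3 3 1 0 h0 h1 (by omega) (Nat.zero_le _) le_rfl (by omega)
          (Nat.zero_le _) (by rw [r3, r1, r0]; ring)
      · push_neg at h1
        have hw1ge : 1 ≤ w 1 := le_trans (by omega) (hmono 1 2 (by omega))
        have hw1 : w 1 = 1 ∨ w 1 = 2 := by omega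
        rcases hw1 with hw1 | hw1
        · exfalso
          have rw1 : rho (w 1) = 1 := by rw [hw1, r1]
          have l0 := rho_lt_two (w 0)
          rw [hsum3, rw1, rw2] at h
          linarith
        · have rw1 : rho (w 1) = 4 / 3 := by rw [hw1, r2]
          have hw0 : 6 ≤ w 0 := by
            by_contra hc
            push_neg at hc
            have : rho (w 0) ≤ rho 5 := rho_mono (by omega)
            rw [hsum3, rw1, rw2] at h
            rw [r5] at this
            linarith
          exact key 5 2 1 0 (by omega) (by omega) (by omega) (Nat.zero_le _)
            (by omega) (by omega) (Nat.zero_le _) (by rw [r5, r2, r1, r0]; ring)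
end

section
/- For every integer k ≥ 0, the set of minimal elements of {v ∈ Ṽ : ρ_k(v) > k + 4} is exactly {(1^{k+5}), (2, 1^{k+3}), (3, 2^{k+2}), (4, 3^{k+1}, 1), (6, 5^{k}, 2, 1)}; consequently every w ∈ Ṽ with ρ_k(w) > k+4 admits v < w with ρ_k(v) = k+4, i.e. ρ_k is (k+4)-separating. -/
/-- The recurrent sequence `u₀ = 0`, `u₁ = 1`, `u_{n+2} = (k+2)·u_{n+1} − u_n`. -/
noncomputable def useq (k : ℕ) : ℕ → ℝ
  | 0 => 0
  | 1 => 1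
  | n + 2 => ((k : ℝ) + 2) * useq k (n + 1) - useq k n

/-- `ρ_k(0) = 0` and `ρ_k(n) = 1 + u_{n−1}/(u_n + 1)` for `n ≥ 1`
(for `k = 0` this is `ρ(n) = 1 + (n−1)/(n+1)`). -/
noncomputable def rhok (k : ℕ) (n : ℕ) : ℝ :=
  if n = 0 then 0 else 1 + useq k (n - 1) / (useq k n + 1)

/-- The extension of `ρ_k` to `Ṽ`: `ρ_k(v) = Σ_i ρ_k(v_i)`, a finite sum since
`ρ_k(0) = 0` and `v` is finitely supported. -/
noncomputable def rhokV (k : ℕ) (v : ℕ → ℕ) : ℝ := ∑ᶠ i, rhok k (v i)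

/-!
Write `x = k + 2`. The sequence `u` satisfies `u n ^ 2 + u (n + 1) ^ 2 = x * u n * u (n + 1) + 1`,
which makes `ρ_k` strictly increasing and bounded by `1 + t` for every `t ≤ 1` with
`t ^ 2 + 1 ≤ x * t`; the values `ρ_k 1, …, ρ_k 5` are explicit.

Let `w` be nonincreasing with `ρ_k w > k + 4`. Inspecting the entries `w 0`, `w k`, …, `w (k + 4)`
shows that `w` dominates one of the five listed sequences: in every other configuration either
`w` lies entrywise below one of `(1^{k+4})`, `(2^{k+3})`, `(3^{k+2}, 1)`, `(5^{k+1}, 2, 1)`, each of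
value exactly `k + 4`, or the uniform bound on `ρ_k` caps `ρ_k w` at `k + 4`. The five sequences
form an antichain, and lowering the first entry of each (for `(1^{k+5})`: dropping the last one)
gives one of these four sequences of value `k + 4`, which is the separating witness.
-/

open Finset

lemma minimal_mem_iff_of_isAntichain {α : Type*} [PartialOrder α] {s t : Set α} {x : α}
    (ht : IsAntichain (· ≤ ·) t) (hts : t ⊆ s) (hst : ∀ y ∈ s, ∃ a ∈ t, a ≤ y) :
    Minimal (· ∈ s) x ↔ x ∈ t := by
  refine ⟨fun hx => ?_, fun hx => ⟨hts hx, fun y hy hyx => ?_⟩⟩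
  · obtain ⟨a, ha, hax⟩ := hst x hx.prop
    rwa [← hx.eq_of_le (hts ha) hax]
  · obtain ⟨a, ha, hay⟩ := hst y hy
    rw [← ht.eq ha hx (hay.trans hyx)]
    exact hay

lemma Antitone.eq_zero_of_le {w : ℕ → ℕ} (hw : Antitone w) {n i : ℕ} (h : w n = 0)
    (hi : n ≤ i) : w i = 0 :=
  Nat.eq_zero_of_le_zero (h ▸ hw hi)

lemma IsVt.antitone {w : ℕ → ℕ} (hw : IsVt w) : Antitone w := fun i j => hw.1 i j

lemma isVt_ofList {l : List ℕ} (hl : l.Pairwise (· ≥ ·)) : IsVt (ofList l) := by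
  refine ⟨fun i j hij => ?_, l.length, fun i hi => List.getD_eq_default _ _ hi⟩
  simp only [ofList]
  rcases lt_or_ge j l.length with hj | hj
  · rcases hij.lt_or_eq with hij | rfl
    · rw [List.getD_eq_getElem _ _ hj, List.getD_eq_getElem _ _ (hij.trans hj)]
      exact List.pairwise_iff_getElem.1 hl i j _ hj hij
    · rfl
  · rw [List.getD_eq_default _ _ hj]; exact Nat.zero_le _

lemma ofList_cons_le {a : ℕ} {l : List ℕ} {w : ℕ → ℕ} (ha : a ≤ w 0)
    (hl : ofList l ≤ fun i => w (i + 1)) : ofList (a :: l) ≤ w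
  | 0 => ha
  | i + 1 => hl i

lemma ofList_replicate_le {n a : ℕ} {w : ℕ → ℕ} (h : ∀ i < n, a ≤ w i) :
    ofList (List.replicate n a) ≤ w := fun i => by
  simp only [ofList]
  rcases lt_or_ge i n with hi | hi
  · rw [List.getD_replicate _ hi]; exact h i hi
  · rw [List.getD_eq_default _ _ (by simpa using hi)]; exact Nat.zero_le _

lemma ofList_append_le {l₁ l₂ : List ℕ} {w : ℕ → ℕ} (h₁ : ofList l₁ ≤ w)
    (h₂ : ofList l₂ ≤ fun i => w (i + l₁.length)) : ofList (l₁ ++ l₂) ≤ w := fun i => by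
  simp only [ofList]
  rcases lt_or_ge i l₁.length with hi | hi
  · rw [List.getD_append _ _ _ _ hi]; exact h₁ i
  · rw [List.getD_append_right _ _ _ _ hi]
    simpa [ofList, Nat.sub_add_cancel hi] using h₂ (i - l₁.length)

lemma ofList_nil_le (w : ℕ → ℕ) : ofList [] ≤ w := fun i => by simp [ofList]

lemma ofList_cons_le_cons {a b : ℕ} (l : List ℕ) (h : b ≤ a) : ofList (b :: l) ≤ ofList (a :: l)
  | 0 => h
  | _ + 1 => le_rfl

lemma ofList_le_append (l l' : List ℕ) : ofList l ≤ ofList (l ++ l') := fun i => by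
  simp only [ofList]
  rcases lt_or_ge i l.length with hi | hi
  · rw [List.getD_append _ _ _ _ hi]
  · rw [List.getD_eq_default _ _ hi]; exact Nat.zero_le _

section

variable {k : ℕ}

lemma useq_nonneg_and_le_succ (n : ℕ) : 0 ≤ useq k n ∧ useq k n ≤ useq k (n + 1) := by
  induction n with
  | zero => simp [useq]
  | succ n ih =>
    refine ⟨ih.1.trans ih.2, ?_⟩
    rw [useq]
    nlinarith [ih.1, ih.2, (Nat.cast_nonneg k : (0 : ℝ) ≤ k)]

lemma useq_sq_add_sq (n : ℕ) :
    useq k n ^ 2 + useq k (n + 1) ^ 2 = (k + 2) * useq k n * useq k (n + 1) + 1 := by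
  induction n with
  | zero => simp [useq]
  | succ n ih => rw [useq]; linear_combination ih

lemma useq_le_mul_useq_succ_add_one (t : ℝ) (ht : t ^ 2 + 1 ≤ (k + 2) * t) (ht1 : t ≤ 1)
    (n : ℕ) : useq k n ≤ t * (useq k (n + 1) + 1) := by
  obtain ⟨hy, hyU⟩ := useq_nonneg_and_le_succ (k := k) n
  set y := useq k n
  set U := useq k (n + 1)
  have hk : (0 : ℝ) ≤ k := Nat.cast_nonneg k
  -- `y` and `(k + 2) * U - y ≥ y` are the roots of `Y ^ 2 - (k + 2) * U * Y + U ^ 2 - 1`, which is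
  -- nonpositive at `t * (U + 1)`.
  have key : (t * (U + 1) - y) * (t * (U + 1) + y - (k + 2) * U)
      = (U + 1) * (U * (t ^ 2 + 1 - (k + 2) * t) + (t ^ 2 - 1)) := by
    linear_combination (-1 : ℝ) * useq_sq_add_sq (k := k) n
  have hneg : (U + 1) * (U * (t ^ 2 + 1 - (k + 2) * t) + (t ^ 2 - 1)) ≤ 0 :=
    mul_nonpos_of_nonneg_of_nonpos (by linarith)
      (by nlinarith [mul_nonpos_of_nonneg_of_nonpos (hy.trans hyU) (sub_nonpos.2 ht)])
  by_contra! h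
  have h2 : t * (U + 1) + y - (k + 2) * U < 0 := by nlinarith
  nlinarith [mul_pos_of_neg_of_neg (sub_neg.2 h) h2]

lemma rhok_zero : rhok k 0 = 0 := by simp [rhok]

lemma rhok_succ (n : ℕ) : rhok k (n + 1) = 1 + useq k n / (useq k (n + 1) + 1) := by
  simp [rhok]

lemma rhok_le_one_add (t : ℝ) (ht : t ^ 2 + 1 ≤ (k + 2) * t) (ht1 : t ≤ 1) (n : ℕ) :
    rhok k n ≤ 1 + t := by
  rcases n with _ | n
  · simp [rhok]; nlinarith
  · have := (useq_nonneg_and_le_succ (k := k) (n + 1)).1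
    rw [rhok_succ, add_le_add_iff_left, div_le_iff₀ (by linarith)]
    exact useq_le_mul_useq_succ_add_one t ht ht1 n

lemma rhok_strictMono : StrictMono (rhok k) := by
  refine strictMono_nat_of_lt_succ fun n => ?_
  rcases n with _ | n
  · simp [rhok, useq]
  · obtain ⟨h0, h1⟩ := useq_nonneg_and_le_succ (k := k) n
    obtain ⟨h2, h3⟩ := useq_nonneg_and_le_succ (k := k) (n + 1)
    rw [rhok_succ, rhok_succ, add_lt_add_iff_left, div_lt_div_iff₀ (by linarith) (by linarith)]
    have hmul : useq k n * useq k (n + 2) = useq k (n + 1) ^ 2 - 1 := by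
      rw [useq]; linear_combination (-1 : ℝ) * useq_sq_add_sq (k := k) n
    nlinarith

lemma rhok_one : rhok k 1 = 1 := by simp [rhok, useq]

lemma rhok_two : rhok k 2 = 1 + 1 / (k + 3) := by
  simp [rhok, useq]; ring_nf

lemma rhok_three : rhok k 3 = 1 + 1 / (k + 2) := by
  simp [rhok, useq]

lemma rhok_four : rhok k 4 = 1 + (k + 3) / (k ^ 2 + 5 * k + 5) := by
  have hk : (0 : ℝ) ≤ k := Nat.cast_nonneg k
  simp only [rhok, useq]
  norm_num
  rw [div_eq_div_iff (by nlinarith) (by positivity)]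
  ring

lemma rhok_five : rhok k 5 = 1 + (k + 2) / ((k + 1) * (k + 3)) := by
  have hk : (0 : ℝ) ≤ k := Nat.cast_nonneg k
  simp only [rhok, useq]
  norm_num
  rw [div_eq_div_iff (by ring_nf; positivity) (by positivity)]
  ring

lemma rhok_le_two (n : ℕ) : rhok k n ≤ 2 := by
  have := rhok_le_one_add (k := k) 1 (by linarith [(Nat.cast_nonneg k : (0 : ℝ) ≤ k)]) le_rfl n
  linarith

lemma sum_range_succ_rhok_le (f : ℕ → ℕ) : ∑ i ∈ range (k + 1), rhok k (f i) ≤ k + 2 := by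
  have hk : (0 : ℝ) ≤ k := Nat.cast_nonneg k
  have hbound (n : ℕ) : rhok k n ≤ 1 + 1 / (k + 1) := by
    refine rhok_le_one_add _ ?_ ?_ n
    · field_simp; nlinarith
    · rw [div_le_one (by positivity)]; linarith
  calc ∑ i ∈ range (k + 1), rhok k (f i) ≤ #(range (k + 1)) • (1 + 1 / ((k : ℝ) + 1)) :=
        sum_le_card_nsmul _ _ _ fun i _ => hbound (f i)
    _ = k + 2 := by simp; field_simp; ring

lemma sum_range_rhok_add_le (f : ℕ → ℕ) :
    ∑ i ∈ range k, rhok k (f i) + rhok k 4 + rhok k 2 + rhok k 1 ≤ k + 4 := by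
  rw [rhok_four, rhok_two, rhok_one]
  rcases Nat.eq_zero_or_pos k with rfl | hk
  · norm_num
  have hk1 : (1 : ℝ) ≤ k := by exact_mod_cast hk
  set D : ℝ := k * (k + 3) * (k ^ 2 + 5 * k + 5)
  have hD : 0 < D := by positivity
  -- the largest `t` with `k * (1 + t) + ρ 4 + ρ 2 + ρ 1 = k + 4`
  set t : ℝ := (k * (k + 3) ^ 2 + 1) / D
  have hbound (n : ℕ) : rhok k n ≤ 1 + t := by
    refine rhok_le_one_add _ ?_ ?_ n
    · have : (k + 2) * t - (t ^ 2 + 1) = (k ^ 3 + 7 * k ^ 2 + 12 * k - 1) / D ^ 2 := by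
        simp only [t, D]; field_simp; ring
      have : 0 ≤ (k ^ 3 + 7 * k ^ 2 + 12 * k - 1 : ℝ) / D ^ 2 := by
        apply div_nonneg _ (sq_nonneg D); nlinarith
      linarith
    · rw [div_le_one hD]; nlinarith
  calc ∑ i ∈ range k, rhok k (f i) + (1 + (k + 3) / (k ^ 2 + 5 * k + 5)) + (1 + 1 / (k + 3)) + 1
      ≤ #(range k) • (1 + t) + (1 + (k + 3) / (k ^ 2 + 5 * k + 5)) + (1 + 1 / (k + 3)) + 1 := by
        gcongr; exact sum_le_card_nsmul _ _ _ fun i _ => hbound (f i)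
    _ = (k : ℝ) + 4 := by simp only [card_range, nsmul_eq_mul, t, D]; field_simp; ring

lemma rhok_le_of_antitone {w : ℕ → ℕ} {m : ℕ} (hw : Antitone w) (h : w 0 ≤ m) (i : ℕ) :
    rhok k (w i) ≤ rhok k m :=
  rhok_strictMono.monotone ((hw (Nat.zero_le i)).trans h)

lemma sum_range_rhok_le_of_antitone {w : ℕ → ℕ} {m : ℕ} (hw : Antitone w) (h : w 0 ≤ m)
    (n : ℕ) : ∑ i ∈ range n, rhok k (w i) ≤ n * rhok k m := by
  simpa using sum_le_card_nsmul (range n) _ _ fun i _ => rhok_le_of_antitone hw h i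

lemma add_three_mul_rhok_two : (k + 3) * rhok k 2 = k + 4 := by
  rw [rhok_two]; field_simp; ring

lemma add_two_mul_rhok_three_add_one : (k + 2) * rhok k 3 + 1 = k + 4 := by
  rw [rhok_three]; field_simp; ring

lemma add_one_mul_rhok_five_add : (k + 1) * rhok k 5 + rhok k 2 + 1 = k + 4 := by
  rw [rhok_five, rhok_two]; field_simp; ring

lemma rhokV_eq_sum_range {w : ℕ → ℕ} {n : ℕ} (h : ∀ i, n ≤ i → w i = 0) :
    rhokV k w = ∑ i ∈ range n, rhok k (w i) := by
  refine finsum_eq_sum_of_support_subset _ fun i hi => ?_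
  by_contra hn
  simp_all [rhok]

lemma rhokV_ofList (l : List ℕ) : rhokV k (ofList l) = (l.map (rhok k)).sum := by
  rw [rhokV_eq_sum_range (w := ofList l) fun i hi => List.getD_eq_default _ _ hi]
  induction l with
  | nil => simp
  | cons a l ih => simp [sum_range_succ', ← ih, ofList, add_comm]

lemma rhokV_ofList_cons_lt {a b : ℕ} (l : List ℕ) (h : b < a) :
    rhokV k (ofList (b :: l)) < rhokV k (ofList (a :: l)) := by
  simpa [rhokV_ofList] using rhok_strictMono h

end

def minimalSolutions (k : ℕ) : Set (ℕ → ℕ) :=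
  {ofList (List.replicate (k + 5) 1),
   ofList (2 :: List.replicate (k + 3) 1),
   ofList (3 :: List.replicate (k + 2) 2),
   ofList (4 :: (List.replicate (k + 1) 3 ++ [1])),
   ofList (6 :: (List.replicate k 5 ++ [2, 1]))}

section

variable {k : ℕ}

lemma isVt_of_mem_minimalSolutions {a : ℕ → ℕ} (ha : a ∈ minimalSolutions k) : IsVt a := by
  simp only [minimalSolutions, Set.mem_insert_iff, Set.mem_singleton_iff] at ha
  rcases ha with rfl | rfl | rfl | rfl | rfl <;>
    exact isVt_ofList (by simp [List.pairwise_append]; try omega)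

lemma exists_le_rhokV_eq_of_mem_minimalSolutions {a : ℕ → ℕ} (ha : a ∈ minimalSolutions k) :
    ∃ v, IsVt v ∧ v ≤ a ∧ rhokV k v = k + 4 ∧ rhokV k v < rhokV k a := by
  simp only [minimalSolutions, Set.mem_insert_iff, Set.mem_singleton_iff] at ha
  rcases ha with rfl | rfl | rfl | rfl | rfl
  · refine ⟨ofList (List.replicate (k + 4) 1), isVt_ofList (by simp), ?_, ?_, ?_⟩
    · conv_rhs => rw [List.replicate_succ']
      exact ofList_le_append _ _
    · simp [rhokV_ofList, rhok_one]
    · norm_num [rhokV_ofList, rhok_one]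
  · refine ⟨ofList (1 :: List.replicate (k + 3) 1), isVt_ofList (by simp),
      ofList_cons_le_cons _ (by norm_num), ?_, rhokV_ofList_cons_lt _ (by norm_num)⟩
    simp [rhokV_ofList, rhok_one]; ring
  · refine ⟨ofList (2 :: List.replicate (k + 2) 2), isVt_ofList (by simp),
      ofList_cons_le_cons _ (by norm_num), ?_, rhokV_ofList_cons_lt _ (by norm_num)⟩
    simp [rhokV_ofList]; linarith [add_three_mul_rhok_two (k := k)]
  · refine ⟨ofList (3 :: (List.replicate (k + 1) 3 ++ [1])),
      isVt_ofList (by simp [List.pairwise_append]),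
      ofList_cons_le_cons _ (by norm_num), ?_, rhokV_ofList_cons_lt _ (by norm_num)⟩
    simp [rhokV_ofList, rhok_one]; linarith [add_two_mul_rhok_three_add_one (k := k)]
  · refine ⟨ofList (5 :: (List.replicate k 5 ++ [2, 1])),
      isVt_ofList (by simp [List.pairwise_append]; omega),
      ofList_cons_le_cons _ (by norm_num), ?_, rhokV_ofList_cons_lt _ (by norm_num)⟩
    simp [rhokV_ofList, rhok_one]; linarith [add_one_mul_rhok_five_add (k := k)]

lemma isAntichain_minimalSolutions : IsAntichain (· ≤ ·) (minimalSolutions k) := by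
  intro a ha b hb hne hle
  -- the entries at `0, k + 1, …, k + 4` already tell the five sequences apart
  have h₀ := hle 0
  have h₁ := hle (k + 1)
  have h₂ := hle (k + 2)
  have h₃ := hle (k + 3)
  have h₄ := hle (k + 4)
  simp only [minimalSolutions, Set.mem_insert_iff, Set.mem_singleton_iff] at ha hb
  rcases ha with rfl | rfl | rfl | rfl | rfl <;> rcases hb with rfl | rfl | rfl | rfl | rfl <;>
    simp [ofList] at hne h₀ h₁ h₂ h₃ h₄

lemma exists_mem_minimalSolutions_le_of_eq_one {w : ℕ → ℕ} (hw : Antitone w)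
    (h₃ : w (k + 3) = 0) (h₂ : w (k + 2) = 1) (h₁ : 2 ≤ w (k + 1))
    (hρ : (k : ℝ) + 4 < rhokV k w) : ∃ a ∈ minimalSolutions k, a ≤ w := by
  rw [rhokV_eq_sum_range fun i => hw.eq_zero_of_le h₃, sum_range_succ, sum_range_succ, h₂,
    rhok_one] at hρ
  by_cases h₁' : 3 ≤ w (k + 1)
  · by_cases h₀ : 4 ≤ w 0
    · exact ⟨ofList (4 :: (List.replicate (k + 1) 3 ++ [1])), by simp [minimalSolutions],
        ofList_cons_le h₀ (ofList_append_le
          (ofList_replicate_le fun i hi => h₁'.trans (hw (by omega)))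
          (ofList_cons_le (by simp [h₂]) (ofList_nil_le _)))⟩
    · have hs := sum_range_rhok_le_of_antitone (k := k) hw (m := 3) (by omega) (k + 1)
      push_cast at hs
      linarith [rhok_le_of_antitone (k := k) hw (m := 3) (by omega) (k + 1),
        add_two_mul_rhok_three_add_one (k := k)]
  replace h₁ : w (k + 1) = 2 := by omega
  rw [h₁] at hρ
  by_cases hk : 5 ≤ w k
  · by_cases h₀ : 6 ≤ w 0
    · exact ⟨ofList (6 :: (List.replicate k 5 ++ [2, 1])), by simp [minimalSolutions],
        ofList_cons_le h₀ (ofList_append_le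
          (ofList_replicate_le fun i hi => hk.trans (hw (by omega)))
          (ofList_cons_le (by simp [h₁])
            (ofList_cons_le (by simp [Nat.add_comm 1 k, h₂]) (ofList_nil_le _))))⟩
    · have hs := sum_range_rhok_le_of_antitone (k := k) hw (m := 5) (by omega) (k + 1)
      push_cast at hs
      linarith [add_one_mul_rhok_five_add (k := k)]
  · rw [sum_range_succ] at hρ
    linarith [(rhok_strictMono (k := k)).monotone (show w k ≤ 4 by omega),
      sum_range_rhok_add_le (k := k) w, rhok_one (k := k)]

lemma exists_mem_minimalSolutions_le_of_eq_zero {w : ℕ → ℕ} (hw : Antitone w)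
    (h₃ : w (k + 3) = 0) (hρ : (k : ℝ) + 4 < rhokV k w) : ∃ a ∈ minimalSolutions k, a ≤ w := by
  have hρsum := hρ
  rw [rhokV_eq_sum_range fun i => hw.eq_zero_of_le h₃, sum_range_succ, sum_range_succ] at hρsum
  by_cases hshort : w (k + 2) = 0 ∨ w (k + 1) ≤ 1
  · have : rhok k (w (k + 1)) + rhok k (w (k + 2)) ≤ 2 := by
      rcases hshort with h | h
      · rw [h, rhok_zero]; linarith [rhok_le_two (k := k) (w (k + 1))]
      · have hmono := rhok_strictMono (k := k) |>.monotone
        linarith [hmono h, hmono ((hw (Nat.le_succ (k + 1))).trans h), rhok_one (k := k)]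
    linarith [sum_range_succ_rhok_le (k := k) w]
  push Not at hshort
  by_cases h₂ : 2 ≤ w (k + 2)
  · by_cases h₀ : 3 ≤ w 0
    · exact ⟨ofList (3 :: List.replicate (k + 2) 2), by simp [minimalSolutions],
        ofList_cons_le h₀ (ofList_replicate_le fun i hi => h₂.trans (hw (by omega)))⟩
    · have hs := sum_range_rhok_le_of_antitone (k := k) hw (m := 2) (by omega) (k + 1)
      push_cast at hs
      linarith [rhok_le_of_antitone (k := k) hw (m := 2) (by omega) (k + 1),
        rhok_le_of_antitone (k := k) hw (m := 2) (by omega) (k + 2),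
        add_three_mul_rhok_two (k := k)]
  exact exists_mem_minimalSolutions_le_of_eq_one hw h₃ (by omega) hshort.2 hρ

lemma exists_mem_minimalSolutions_le {w : ℕ → ℕ} (hw : Antitone w)
    (hρ : (k : ℝ) + 4 < rhokV k w) : ∃ a ∈ minimalSolutions k, a ≤ w := by
  by_cases h₄ : 1 ≤ w (k + 4)
  · exact ⟨ofList (List.replicate (k + 5) 1), by simp [minimalSolutions],
      ofList_replicate_le fun i hi => h₄.trans (hw (by omega))⟩
  by_cases h₃ : 1 ≤ w (k + 3)
  · by_cases h₀ : 2 ≤ w 0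
    · exact ⟨ofList (2 :: List.replicate (k + 3) 1), by simp [minimalSolutions],
        ofList_cons_le h₀ (ofList_replicate_le fun i hi => h₃.trans (hw (by omega)))⟩
    · rw [rhokV_eq_sum_range fun i => hw.eq_zero_of_le (show w (k + 4) = 0 by omega)] at hρ
      have := sum_range_rhok_le_of_antitone (k := k) hw (m := 1) (by omega) (k + 4)
      push_cast [rhok_one] at this
      linarith
  exact exists_mem_minimalSolutions_le_of_eq_zero hw (by omega) hρ

end

/-- For every integer `k ≥ 0`, the set of minimal elements of
`{v ∈ Ṽ : ρ_k(v) > k + 4}` is exactly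
`{(1^{k+5}), (2,1^{k+3}), (3,2^{k+2}), (4,3^{k+1},1), (6,5^k,2,1)}`; consequently
every `w ∈ Ṽ` with `ρ_k(w) > k + 4` admits `v < w` with `ρ_k(v) = k + 4`,
i.e. `ρ_k` is `(k+4)`-separating. -/
theorem rhok_minimal_solutions_and_separating (k : ℕ) :
    ({w | (IsVt w ∧ rhokV k w > (k : ℝ) + 4) ∧
        ∀ v : ℕ → ℕ, IsVt v → rhokV k v > (k : ℝ) + 4 → (∀ i, v i ≤ w i) → v = w}
      = {ofList (List.replicate (k + 5) 1),
         ofList (2 :: List.replicate (k + 3) 1),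
         ofList (3 :: List.replicate (k + 2) 2),
         ofList (4 :: (List.replicate (k + 1) 3 ++ [1])),
         ofList (6 :: (List.replicate k 5 ++ [2, 1]))}) ∧
    ∀ w : ℕ → ℕ, IsVt w → rhokV k w > (k : ℝ) + 4 →
      ∃ v : ℕ → ℕ, IsVt v ∧ (∀ i, v i ≤ w i) ∧ v ≠ w ∧ rhokV k v = (k : ℝ) + 4 := by
  set S := {w | IsVt w ∧ (k : ℝ) + 4 < rhokV k w}
  have hsol : minimalSolutions k ⊆ S := fun a ha =>
    ⟨isVt_of_mem_minimalSolutions ha, by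
      obtain ⟨v, -, -, hv, hlt⟩ := exists_le_rhokV_eq_of_mem_minimalSolutions ha
      linarith⟩
  have hdom (w : ℕ → ℕ) (hw : w ∈ S) : ∃ a ∈ minimalSolutions k, a ≤ w :=
    exists_mem_minimalSolutions_le hw.1.antitone hw.2
  refine ⟨Set.ext fun w => ?_, fun w hw hρ => ?_⟩
  · change _ ↔ w ∈ minimalSolutions k
    rw [← minimal_mem_iff_of_isAntichain isAntichain_minimalSolutions hsol hdom, minimal_iff]
    simp only [S, Set.mem_ofPred_eq, gt_iff_lt, and_imp, Pi.le_def]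
    exact and_congr_right' (forall₄_congr fun _ _ _ _ => eq_comm)
  · obtain ⟨a, ha, haw⟩ := hdom w ⟨hw, hρ⟩
    obtain ⟨v, hv, hva, hvρ, -⟩ := exists_le_rhokV_eq_of_mem_minimalSolutions ha
    exact ⟨v, hv, hva.trans haw, by rintro rfl; linarith, hvρ⟩
end
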